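/- arXiv:1011.5473 — 2 statements merged into one kernel-verified Lean document; each statement's English description precedes it below -/
import Mathlib

section
/- For each integer n ≥ 2, there is a unique real λ_n > 0 satisfying (n+1)^{-λ_n} + (n-1)·n^{-λ_n} = 1, and λ_n > log(n-1)/log(n) for n ≥ 3. -/
open Real

/-- For each integer `n ≥ 2` there is a unique `λ > 0` with
`(n+1)^{-λ} + (n-1)·n^{-λ} = 1`, and for `n ≥ 3` this root exceeds `log(n-1)/log n`. -/
theorem stmt3 (n : ℕ) (hn : 2 ≤ n) :
    (∃! l : ℝ, 0 < l ∧
        ((n : ℝ) + 1) ^ (-l) + ((n : ℝ) - 1) * (n : ℝ) ^ (-l) = 1) ∧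
      (3 ≤ n → ∀ l : ℝ, 0 < l →
        ((n : ℝ) + 1) ^ (-l) + ((n : ℝ) - 1) * (n : ℝ) ^ (-l) = 1 →
        Real.log ((n : ℝ) - 1) / Real.log (n : ℝ) < l) := by
  set N : ℝ := (n : ℝ) with hNdef
  have hN2 : (2 : ℝ) ≤ N := by rw [hNdef]; exact_mod_cast hn
  have hN1 : 1 < N := by linarith
  have hN0 : 0 < N := by linarith
  have hN11 : 1 < N + 1 := by linarith
  have hN10 : 0 < N + 1 := by linarith
  have hc : 0 < N - 1 := by linarith
  set f : ℝ → ℝ := fun l => (N + 1) ^ (-l) + (N - 1) * N ^ (-l) with hf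
  -- strict antitonicity
  have hanti : StrictAnti f := by
    intro x y hxy
    have h1 : (N + 1) ^ (-y) < (N + 1) ^ (-x) :=
      Real.rpow_lt_rpow_of_exponent_lt hN11 (by linarith)
    have h2 : N ^ (-y) < N ^ (-x) :=
      Real.rpow_lt_rpow_of_exponent_lt hN1 (by linarith)
    have h3 := mul_lt_mul_of_pos_left h2 hc
    simpa [hf] using add_lt_add h1 h3
  -- continuity
  have hcont : Continuous f := by
    have e : f = fun l => Real.exp (Real.log (N + 1) * (-l)) +
        (N - 1) * Real.exp (Real.log N * (-l)) := by
      funext l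
      simp [hf, Real.rpow_def_of_pos hN10, Real.rpow_def_of_pos hN0]
    rw [e]
    fun_prop
  have hf0 : f 0 = N := by
    simp [hf]
  have hsq : ∀ x : ℝ, 0 < x → x ^ (-2 : ℝ) = (x ^ 2)⁻¹ := by
    intro x hx
    rw [Real.rpow_neg hx.le, show ((2 : ℝ)) = ((2 : ℕ) : ℝ) by norm_num,
      Real.rpow_natCast]
  have hf2 : f 2 < 1 := by
    have h1 : (N + 1) ^ (-2 : ℝ) = ((N + 1) ^ 2)⁻¹ := hsq _ hN10
    have h2 : N ^ (-2 : ℝ) = (N ^ 2)⁻¹ := hsq _ hN0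
    have hp1 : (0 : ℝ) < (N + 1) ^ 2 := by positivity
    have hp2 : (0 : ℝ) < N ^ 2 := by positivity
    have k1 : ((N + 1) ^ 2)⁻¹ ≤ (N ^ 2)⁻¹ := by
      apply inv_anti₀ hp2
      nlinarith
    have k2 : (N - 1) * (N ^ 2)⁻¹ = N * (N ^ 2)⁻¹ - (N ^ 2)⁻¹ := by ring
    have k3 : N * (N ^ 2)⁻¹ = N⁻¹ := by
      field_simp
    have k4 : N⁻¹ < 1 := by
      rw [inv_lt_one_iff₀]; right; exact hN1
    have k5 : (0:ℝ) < (N^2)⁻¹ := by positivity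
    simp only [hf, h1, h2]
    calc ((N + 1) ^ 2)⁻¹ + (N - 1) * (N ^ 2)⁻¹
        ≤ (N ^ 2)⁻¹ + ((N * (N ^ 2)⁻¹) - (N ^ 2)⁻¹) := by rw [← k2]; linarith
      _ = N⁻¹ := by rw [k3]; ring
      _ < 1 := k4
  -- existence
  have hmem : (1 : ℝ) ∈ Set.Icc (f 2) (f 0) := ⟨hf2.le, by rw [hf0]; linarith⟩
  obtain ⟨l, hlmem, hfl⟩ := intermediate_value_Icc' (by norm_num : (0:ℝ) ≤ 2)
    hcont.continuousOn hmem
  have hlpos : 0 < l := by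
    rcases lt_or_eq_of_le hlmem.1 with h | h
    · exact h
    · exfalso; rw [← h] at hfl; rw [hf0] at hfl; linarith
  refine ⟨⟨l, ⟨hlpos, hfl⟩, ?_⟩, ?_⟩
  · rintro y ⟨-, hy⟩
    exact hanti.injective (hy.trans hfl.symm)
  · intro hn3 m hm hfm
    have hN3 : (3 : ℝ) ≤ N := by rw [hNdef]; exact_mod_cast hn3
    have hN1' : 1 < N - 1 := by linarith
    set μ : ℝ := Real.log (N - 1) / Real.log N with hμ
    have hNμ : N ^ (-μ) = (N - 1)⁻¹ := by
      rw [Real.rpow_neg hN0.le]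
      have : N ^ μ = N - 1 := by
        rw [hμ, ← Real.logb, Real.rpow_logb hN0 (by linarith) (by linarith)]
      rw [this]
    have hfμ : 1 < f μ := by
      have h1 : 0 < (N + 1) ^ (-μ) := Real.rpow_pos_of_pos hN10 _
      have h2 : (N - 1) * N ^ (-μ) = 1 := by
        rw [hNμ]; field_simp
      simp only [hf]
      rw [h2]; linarith
    by_contra hcon
    push_neg at hcon
    have h5 : f μ ≤ f m := hanti.antitone hcon
    have h6 : f m = 1 := hfm
    rw [h6] at h5
    linarith
end

section
/- Let λ_n > 0 be defined for integers n ≥ 3 by the equation (n+1)^{-λ_n} + (n-1)·n^{-λ_n} = 1. Then λ_n → 1 as n → ∞. -/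
open Real Filter

/-
Proof idea: λ_n is squeezed between log(n-1)/log n and 1. Dropping the positive term
(n+1)^{-λ_n} gives (n-1)·n^{-λ_n} < 1, i.e. λ_n > log(n-1)/log n. Conversely, if λ_n > 1
then the left-hand side is below (n+1)^{-1} + (n-1)/n = 1 - 1/n + 1/(n+1) < 1.
Finally log(n-1)/log n = 1 + (log(n-1) - log n)/log n → 1.
-/

namespace Real

theorem tendsto_log_add_div_log (y : ℝ) :
    Tendsto (fun x : ℝ => log (x + y) / log x) atTop (nhds 1) := by
  have hsum : Tendsto (fun x : ℝ => 1 + (log (x + y) - log x) * (log x)⁻¹) atTop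
      (nhds (1 + 0 * 0)) :=
    ((tendsto_log_comp_add_sub_log y).mul tendsto_log_atTop.inv_tendsto_atTop).const_add 1
  rw [mul_zero, add_zero] at hsum
  refine hsum.congr' ?_
  filter_upwards [eventually_gt_atTop 1] with x hx
  have hlog : log x ≠ 0 := (log_pos hx).ne'
  field_simp
  ring

theorem log_div_log_lt_of_mul_rpow_neg_lt_one {c x l : ℝ} (hc : 0 < c) (hx : 1 < x)
    (h : c * x ^ (-l) < 1) : log c / log x < l := by
  have hx0 : 0 < x := zero_lt_one.trans hx
  have hc_lt : c < x ^ l := by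
    rwa [rpow_neg hx0.le, ← div_eq_mul_inv, div_lt_one (rpow_pos_of_pos hx0 l)] at h
  rw [div_lt_iff₀ (log_pos hx)]
  exact (lt_rpow_iff_log_lt hc hx0).mp hc_lt

theorem rpow_neg_add_sub_one_mul_rpow_neg_lt_one {x l : ℝ} (hx : 1 ≤ x) (hl : 1 ≤ l) :
    (x + 1) ^ (-l) + (x - 1) * x ^ (-l) < 1 := by
  have hx0 : 0 < x := zero_lt_one.trans_le hx
  have h₁ : (x + 1) ^ (-l) ≤ (x + 1)⁻¹ := by
    rw [← rpow_neg_one]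
    exact rpow_le_rpow_of_exponent_le (by linarith) (neg_le_neg hl)
  have h₂ : (x - 1) * x ^ (-l) ≤ (x - 1) * x⁻¹ := by
    rw [← rpow_neg_one]
    exact mul_le_mul_of_nonneg_left (rpow_le_rpow_of_exponent_le hx (neg_le_neg hl))
      (by linarith)
  have h₃ : (x + 1)⁻¹ < x⁻¹ := inv_strictAnti₀ hx0 (by linarith)
  have h₄ : (x - 1) * x⁻¹ = 1 - x⁻¹ := by field_simp
  linarith

end Real

theorem stmt4_general (l : ℕ → ℝ)
    (heq : ∀ n : ℕ, 3 ≤ n →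
      ((n : ℝ) + 1) ^ (-(l n)) + ((n : ℝ) - 1) * (n : ℝ) ^ (-(l n)) = 1) :
    Tendsto l atTop (nhds 1) := by
  have hlower : Tendsto (fun n : ℕ => log ((n : ℝ) - 1) / log n) atTop (nhds 1) := by
    simpa only [sub_eq_add_neg, Function.comp_def] using
      (tendsto_log_add_div_log (-1)).comp tendsto_natCast_atTop_atTop
  refine tendsto_of_tendsto_of_tendsto_of_le_of_le' hlower tendsto_const_nhds ?_ ?_ <;>
    filter_upwards [eventually_ge_atTop 3] with n hn <;>
    have hn3 : (3 : ℝ) ≤ n := by exact_mod_cast hn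
  · refine (log_div_log_lt_of_mul_rpow_neg_lt_one (by linarith) (by linarith) ?_).le
    have := rpow_pos_of_pos (by linarith : (0 : ℝ) < n + 1) (-(l n))
    linarith [heq n hn]
  · by_contra! hl
    exact (rpow_neg_add_sub_one_mul_rpow_neg_lt_one (by linarith) hl.le).ne (heq n hn)

/-- If `λ n > 0` satisfies `(n+1)^{-λ n} + (n-1)·n^{-λ n} = 1` for all `n ≥ 3`,
then `λ n → 1` as `n → ∞`. -/
theorem stmt4 (l : ℕ → ℝ)
    (hpos : ∀ n : ℕ, 3 ≤ n → 0 < l n)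
    (heq : ∀ n : ℕ, 3 ≤ n →
      ((n : ℝ) + 1) ^ (-(l n)) + ((n : ℝ) - 1) * (n : ℝ) ^ (-(l n)) = 1) :
    Tendsto l atTop (nhds 1) :=
  stmt4_general l heq
end
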